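/- For all odd integers j ≥ 3 and b ≥ 3, the rooted tree RT(0^j, 1, b) is super edge-graceful. -/

import Mathlib

/-- Edge type of the rooted tree `RT(a₀, …, a_{n-1})`: one edge from the root to each
child `i` (`Sum.inl i`), and one edge from child `i` to each of its `a i` leaf children
(`Sum.inr ⟨i, m⟩`).  The number of edges is `q = n + ∑ i, a i`. -/
abbrev RTEdge (n : ℕ) (a : Fin n → ℕ) := (Fin n) ⊕ (Σ i : Fin n, Fin (a i))

/-- Vertex type of the rooted tree `RT(a₀, …, a_{n-1})`: the root (`none`), the children
`some (.inl i)` of the root, and the leaves `some (.inr ⟨i, m⟩)` attached to child `i`.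
The number of vertices is `p = q + 1`. -/
abbrev RTVertex (n : ℕ) (a : Fin n → ℕ) := Option (RTEdge n a)

/-- The vertex labeling induced by an edge labeling `f`: each vertex gets the sum of the
labels of the edges incident with it. -/
def vertexSum {n : ℕ} (a : Fin n → ℕ) (f : RTEdge n a → ℤ) : RTVertex n a → ℤ
  | none => ∑ i : Fin n, f (Sum.inl i)
  | some (Sum.inl i) => f (Sum.inl i) + ∑ m : Fin (a i), f (Sum.inr ⟨i, m⟩)
  | some (Sum.inr ⟨i, m⟩) => f (Sum.inr ⟨i, m⟩)

/-- The target label set for `q` objects: `{0, ±1, …, ±(q-1)/2}` if `q` is odd, and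
`{±1, …, ±(q/2)}` if `q` is even. -/
noncomputable def segSet (q : ℕ) : Finset ℤ :=
  if q % 2 = 0 then (Finset.Icc (-((q / 2 : ℕ) : ℤ)) ((q / 2 : ℕ) : ℤ)).erase 0
  else Finset.Icc (-((q / 2 : ℕ) : ℤ)) ((q / 2 : ℕ) : ℤ)

/-- The rooted tree `RT(a₀, …, a_{n-1})` is super edge-graceful: there is an edge
labeling which is a bijection onto `{0, ±1, …, ±(q-1)/2}` (`q` odd) resp.
`{±1, …, ±(q/2)}` (`q` even) whose induced vertex labeling is a bijection onto
`{0, ±1, …, ±(p-1)/2}` (`p` odd) resp. `{±1, …, ±(p/2)}` (`p` even), where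
`q = n + ∑ i, a i` and `p = q + 1`. -/
def IsSEG {n : ℕ} (a : Fin n → ℕ) : Prop :=
  ∃ f : RTEdge n a → ℤ,
    Set.BijOn f Set.univ ↑(segSet (n + ∑ i, a i)) ∧
    Set.BijOn (vertexSum a f) Set.univ ↑(segSet (n + ∑ i, a i + 1))

/-- The sequence `(0^j, a, b)` of length `j + 2`. -/
def seq2 (j a b : ℕ) : Fin (j + 2) → ℕ :=
  fun i => if (i : ℕ) < j then 0 else if (i : ℕ) = j then a else b


/-! Write `j = 2s + 1`, `b = 2T + 1`, so that there are `q = 2s + 2T + 5` edges. Number the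
edges `0, …, q - 1`: the root edge to child `i` gets `i` and the `m`-th leaf edge below child `i`
gets `i + m + 2`; every non-root vertex takes the number of the edge above it and the root takes
`q`. The `2s + 1` root edges to leafless children are labelled
`-(s+T+2), …, -(T+2), -2, T+2, …, s+T` (sum `-(2s+2T+5)`), the one-leaf child hangs on `s+T+2`
with leaf edge `1`, and the last child hangs on `0` with leaf edges
`-(T+1), …, -3, -1, 2, …, T+1, s+T+1` (sum `s+T+2`); together these are `-(s+T+2), …, s+T+2`.
Every vertex other than the root and the last two children inherits the label of the edge above
it; those two children get `s+T+3` and `s+T+2` and the root gets `-(s+T+3)`, so the vertex labels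
are the edge labels with `0` traded for `±(s+T+3)`. -/

open Finset

theorem Set.bijOn_univ_of_injective {α β : Type*} [Fintype α] {f : α → β} {S : Finset β}
    (hf : Function.Injective f) (hS : ∀ x, f x ∈ S) (hcard : #S ≤ Fintype.card α) :
    Set.BijOn f Set.univ S := by
  have hsurj := surjOn_of_injOn_of_card_le f (s := Finset.univ) (fun x _ => hS x) hf.injOn hcard
  exact ⟨fun x _ => hS x, hf.injOn, by simpa using hsurj⟩

theorem card_segSet (q : ℕ) : #(segSet q) = q := by
  unfold segSet
  split_ifs with hq
  · rw [card_erase_of_mem (by simp; omega), Int.card_Icc]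
    omega
  · rw [Int.card_Icc]
    omega

theorem mem_segSet_of_odd {q : ℕ} (hq : q % 2 = 1) {x : ℤ} :
    x ∈ segSet q ↔ -((q / 2 : ℕ) : ℤ) ≤ x ∧ x ≤ (q / 2 : ℕ) := by
  simp [segSet, hq]

theorem mem_segSet_of_even {q : ℕ} (hq : q % 2 = 0) {x : ℤ} :
    x ∈ segSet q ↔ x ≠ 0 ∧ -((q / 2 : ℕ) : ℤ) ≤ x ∧ x ≤ (q / 2 : ℕ) := by
  simp [segSet, hq]

theorem card_rtEdge {n : ℕ} (a : Fin n → ℕ) : Fintype.card (RTEdge n a) = n + ∑ i, a i := by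
  simp [RTEdge, Fintype.card_sigma]

theorem card_rtVertex {n : ℕ} (a : Fin n → ℕ) :
    Fintype.card (RTVertex n a) = n + ∑ i, a i + 1 := by
  rw [Fintype.card_option, card_rtEdge]

theorem sum_seq2 (j a b : ℕ) : ∑ i, seq2 j a b i = a + b := by
  rw [Fin.sum_univ_castSucc, Fin.sum_univ_castSucc]
  simp [seq2]

theorem two_mul_sum_range_add (n : ℕ) (c : ℤ) :
    2 * ∑ k ∈ range n, ((k : ℤ) + c) = n * (n - 1) + 2 * n * c := by
  induction n with
  | zero => simp
  | succ n ih =>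
    rw [sum_range_succ, mul_add, ih]
    push_cast
    ring

namespace SuperEdgeGraceful

variable (s T : ℕ)

abbrev shape : Fin (2 * s + 1 + 2) → ℕ := seq2 (2 * s + 1) 1 (2 * T + 1)

def stemLabel (k : ℕ) : ℤ :=
  if k ≤ s then k - (s + T + 2) else if k = s + 1 then -2 else k - s + T

def leafLabel (m : ℕ) : ℤ :=
  if m + 2 ≤ T then m - (T + 1) else if m + 1 = T then -1 else if m < 2 * T then m - T + 2
  else s + T + 1

def edgeLabel (k : ℕ) : ℤ :=
  if k ≤ 2 * s then stemLabel s T k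
  else if k = 2 * s + 1 then s + T + 2
  else if k = 2 * s + 2 then 0
  else if k = 2 * s + 3 then 1
  else leafLabel s T (k - (2 * s + 4))

def vertexLabel (k : ℕ) : ℤ :=
  if k = 2 * s + 2 * T + 5 then -(s + T + 3)
  else if k = 2 * s + 1 then s + T + 3
  else if k = 2 * s + 2 then s + T + 2
  else edgeLabel s T k

def edgeIndex : RTEdge (2 * s + 1 + 2) (shape s T) → ℕ
  | .inl i => i
  | .inr ⟨i, m⟩ => i + m + 2

def vertexIndex : RTVertex (2 * s + 1 + 2) (shape s T) → ℕ
  | none => 2 * s + 2 * T + 5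
  | some e => edgeIndex s T e

theorem stemLabel_band (k : ℕ) :
    stemLabel s T k = -2 ∨ -((s + T + 2 : ℕ) : ℤ) ≤ stemLabel s T k ∧ stemLabel s T k ≤ -(T + 2)
      ∨ T + 2 ≤ stemLabel s T k ∧ stemLabel s T k = k - s + T := by
  unfold stemLabel
  split_ifs <;> omega

theorem leafLabel_band (m : ℕ) :
    leafLabel s T m = -1 ∨ -((T + 1 : ℕ) : ℤ) ≤ leafLabel s T m ∧ leafLabel s T m ≤ -3
      ∨ 2 ≤ leafLabel s T m ∧ leafLabel s T m ≤ T + 1 ∨ leafLabel s T m = s + T + 1 := by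
  unfold leafLabel
  split_ifs <;> omega

variable {s T}

theorem stemLabel_injective (hT : 1 ≤ T) : Function.Injective (stemLabel s T) := by
  intro k k' h
  unfold stemLabel at h
  split_ifs at h <;> omega

theorem leafLabel_injOn (hs : 1 ≤ s) : Set.InjOn (leafLabel s T) (Set.Iic (2 * T)) := by
  intro m hm m' hm' h
  rw [Set.mem_Iic] at hm hm'
  unfold leafLabel at h
  split_ifs at h <;> omega

theorem edgeLabel_two_mul_add_one : edgeLabel s T (2 * s + 1) = s + T + 2 := by
  rw [edgeLabel, if_neg (by omega), if_pos rfl]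

theorem edgeLabel_two_mul_add_two : edgeLabel s T (2 * s + 2) = 0 := by
  rw [edgeLabel, if_neg (by omega), if_neg (by omega), if_pos rfl]

theorem edgeLabel_two_mul_add_three : edgeLabel s T (2 * s + 3) = 1 := by
  rw [edgeLabel, if_neg (by omega), if_neg (by omega), if_neg (by omega), if_pos rfl]

theorem edgeLabel_leaf (m : ℕ) : edgeLabel s T (2 * s + 4 + m) = leafLabel s T m := by
  rw [edgeLabel, if_neg (by omega), if_neg (by omega), if_neg (by omega), if_neg (by omega),
    Nat.add_sub_cancel_left]

theorem edgeLabel_mem {k : ℕ} (hk : k < 2 * s + 2 * T + 5) :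
    -((s + T + 2 : ℕ) : ℤ) ≤ edgeLabel s T k ∧ edgeLabel s T k ≤ (s + T + 2 : ℕ) := by
  have := stemLabel_band s T k
  have := leafLabel_band s T (k - (2 * s + 4))
  unfold edgeLabel
  split_ifs <;> omega

theorem edgeLabel_injOn (hs : 1 ≤ s) (hT : 1 ≤ T) :
    Set.InjOn (edgeLabel s T) (Set.Iio (2 * s + 2 * T + 5)) := by
  intro k hk k' hk' h
  rw [Set.mem_Iio] at hk hk'
  -- stem labels, leaf labels and the special labels `s+T+2, 0, 1` occupy disjoint bands
  have := stemLabel_band s T k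
  have := stemLabel_band s T k'
  have := leafLabel_band s T (k - (2 * s + 4))
  have := leafLabel_band s T (k' - (2 * s + 4))
  have := @stemLabel_injective s T hT k k'
  have := leafLabel_injOn hs (Set.mem_Iic.2 (show k - (2 * s + 4) ≤ 2 * T by omega))
    (Set.mem_Iic.2 (show k' - (2 * s + 4) ≤ 2 * T by omega))
  unfold edgeLabel at h
  split_ifs at h <;> omega

theorem vertexLabel_mem (hs : 1 ≤ s) (hT : 1 ≤ T) {k : ℕ} (hk : k < 2 * s + 2 * T + 6) :
    vertexLabel s T k ≠ 0 ∧
      -((s + T + 3 : ℕ) : ℤ) ≤ vertexLabel s T k ∧ vertexLabel s T k ≤ (s + T + 3 : ℕ) := by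
  have : k < 2 * s + 2 * T + 5 → edgeLabel s T k = 0 → k = 2 * s + 2 := fun hk h =>
    edgeLabel_injOn hs hT hk (show 2 * s + 2 < 2 * s + 2 * T + 5 by omega)
      (h.trans edgeLabel_two_mul_add_two.symm)
  have := @edgeLabel_mem s T k
  unfold vertexLabel
  split_ifs <;> omega

theorem vertexLabel_injOn (hs : 1 ≤ s) (hT : 1 ≤ T) :
    Set.InjOn (vertexLabel s T) (Set.Iio (2 * s + 2 * T + 6)) := by
  intro k hk k' hk' h
  rw [Set.mem_Iio] at hk hk'
  have inj {x y : ℕ} (hx : x < 2 * s + 2 * T + 5) (hy : y < 2 * s + 2 * T + 5) :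
      edgeLabel s T x = edgeLabel s T y → x = y :=
    edgeLabel_injOn hs hT hx hy
  have := @inj k k'
  have := @inj k (2 * s + 1)
  have := @inj k' (2 * s + 1)
  have := @edgeLabel_mem s T k
  have := @edgeLabel_mem s T k'
  have := @edgeLabel_two_mul_add_one s T
  unfold vertexLabel at h
  split_ifs at h <;> omega

theorem sum_stemLabel (hs : 1 ≤ s) :
    ∑ k ∈ range (2 * s + 1), stemLabel s T k = -(2 * s + 2 * T + 5) := by
  obtain ⟨r, rfl⟩ : ∃ r, s = r + 1 := ⟨s - 1, by omega⟩
  rw [show 2 * (r + 1) + 1 = r + 2 + 1 + r by ring, sum_range_add _ (r + 2 + 1),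
    sum_range_succ]
  have hlow : ∑ k ∈ range (r + 2), stemLabel (r + 1) T k
      = ∑ k ∈ range (r + 2), ((k : ℤ) + -(r + T + 3)) := by
    refine sum_congr rfl fun k hk => ?_
    rw [mem_range] at hk
    rw [stemLabel, if_pos (by omega)]
    push_cast
    ring
  have hmid : stemLabel (r + 1) T (r + 2) = -2 := by simp [stemLabel]
  have hhigh : ∑ k ∈ range r, stemLabel (r + 1) T (r + 2 + 1 + k)
      = ∑ k ∈ range r, ((k : ℤ) + (T + 2)) := by
    refine sum_congr rfl fun k _ => ?_
    rw [stemLabel, if_neg (by omega), if_neg (by omega)]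
    push_cast
    ring
  rw [hlow, hmid, hhigh]
  have := two_mul_sum_range_add (r + 2) (-(r + T + 3))
  have := two_mul_sum_range_add r (T + 2)
  push_cast at *
  linarith

theorem sum_leafLabel (hT : 1 ≤ T) :
    ∑ m ∈ range (2 * T + 1), leafLabel s T m = s + T + 2 := by
  obtain ⟨r, rfl⟩ : ∃ r, T = r + 1 := ⟨T - 1, by omega⟩
  rw [show 2 * (r + 1) + 1 = r + 1 + (r + 1) + 1 by ring, sum_range_succ, sum_range_add,
    sum_range_succ]
  have hlow : ∑ m ∈ range r, leafLabel s (r + 1) m = ∑ m ∈ range r, ((m : ℤ) + -(r + 2)) := by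
    refine sum_congr rfl fun m hm => ?_
    rw [mem_range] at hm
    rw [leafLabel, if_pos (by omega)]
    push_cast
    ring
  have hmid : leafLabel s (r + 1) r = -1 := by simp [leafLabel]
  have hhigh : ∑ m ∈ range (r + 1), leafLabel s (r + 1) (r + 1 + m)
      = ∑ m ∈ range (r + 1), ((m : ℤ) + 2) := by
    refine sum_congr rfl fun m hm => ?_
    rw [mem_range] at hm
    rw [leafLabel, if_neg (by omega), if_neg (by omega), if_pos (by omega)]
    push_cast
    ring
  have htop : leafLabel s (r + 1) (r + 1 + (r + 1)) = s + (r + 1) + 1 := by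
    rw [leafLabel, if_neg (by omega), if_neg (by omega), if_neg (by omega)]
    push_cast
    ring
  rw [hlow, hmid, hhigh, htop]
  have := two_mul_sum_range_add r (-(r + 2))
  have := two_mul_sum_range_add (r + 1) 2
  push_cast at *
  linarith

theorem sum_edgeLabel_rootEdges (hs : 1 ≤ s) :
    ∑ k ∈ range (2 * s + 1 + 2), edgeLabel s T k = -(s + T + 3) := by
  have hstems : ∑ k ∈ range (2 * s + 1), edgeLabel s T k
      = ∑ k ∈ range (2 * s + 1), stemLabel s T k :=
    sum_congr rfl fun k hk => if_pos (by rw [mem_range] at hk; omega)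
  rw [sum_range_succ, sum_range_succ, hstems, sum_stemLabel hs, edgeLabel_two_mul_add_one,
    edgeLabel_two_mul_add_two]
  ring

theorem lt_shape {i : Fin (2 * s + 1 + 2)} {m : ℕ} (hm : m < shape s T i) :
    (i : ℕ) = 2 * s + 1 ∧ m = 0 ∨ (i : ℕ) = 2 * s + 2 ∧ m ≤ 2 * T := by
  have := i.isLt
  simp only [shape, seq2] at hm
  split_ifs at hm <;> omega

theorem edgeIndex_lt (e : RTEdge (2 * s + 1 + 2) (shape s T)) :
    edgeIndex s T e < 2 * s + 2 * T + 5 := by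
  rcases e with i | ⟨i, m⟩
  · simp only [edgeIndex]
    omega
  · have := lt_shape m.isLt
    simp only [edgeIndex]
    omega

theorem edgeIndex_injective : Function.Injective (edgeIndex s T) := by
  rintro (i | ⟨i, m⟩) (i' | ⟨i', m'⟩) h <;> simp only [edgeIndex] at h
  · exact congrArg Sum.inl (Fin.ext h)
  · have := lt_shape m'.isLt
    omega
  · have := lt_shape m.isLt
    omega
  · have := lt_shape m.isLt
    have := lt_shape m'.isLt
    obtain rfl : i = i' := Fin.ext (by omega)
    obtain rfl : m = m' := Fin.ext (by omega)
    rfl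

theorem vertexIndex_lt (v : RTVertex (2 * s + 1 + 2) (shape s T)) :
    vertexIndex s T v < 2 * s + 2 * T + 6 := by
  rcases v with _ | e
  · simp [vertexIndex]
  · have := edgeIndex_lt e
    simp only [vertexIndex]
    omega

theorem vertexIndex_injective : Function.Injective (vertexIndex s T) := by
  rintro (_ | e) (_ | e') h <;> simp only [vertexIndex] at h
  · rfl
  · have := edgeIndex_lt e'
    omega
  · have := edgeIndex_lt e
    omega
  · rw [edgeIndex_injective h]

theorem vertexSum_edgeLabel (hs : 1 ≤ s) (hT : 1 ≤ T) :
    vertexSum (shape s T) (fun e => edgeLabel s T (edgeIndex s T e))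
      = fun v => vertexLabel s T (vertexIndex s T v) := by
  funext v
  rcases v with _ | i | ⟨i, m⟩
  · change ∑ i : Fin (2 * s + 1 + 2), edgeLabel s T i = vertexLabel s T (2 * s + 2 * T + 5)
    rw [Fin.sum_univ_eq_sum_range (fun k => edgeLabel s T k), sum_edgeLabel_rootEdges hs,
      vertexLabel, if_pos rfl]
  · change edgeLabel s T i + ∑ m : Fin (shape s T i), edgeLabel s T (i + m + 2)
      = vertexLabel s T i
    rw [Fin.sum_univ_eq_sum_range (fun m => edgeLabel s T (i + m + 2))]
    rcases (show (i : ℕ) < 2 * s + 1 ∨ (i : ℕ) = 2 * s + 1 ∨ (i : ℕ) = 2 * s + 2 by omega)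
      with h | h | h
    · have hleaves : shape s T i = 0 := by simp [shape, seq2, h]
      rw [hleaves, sum_range_zero, add_zero, vertexLabel, if_neg (by omega), if_neg (by omega),
        if_neg (by omega)]
    · have hleaves : shape s T i = 1 := by simp [shape, seq2, h]
      rw [hleaves, sum_range_one, h, add_zero, edgeLabel_two_mul_add_one,
        edgeLabel_two_mul_add_three, vertexLabel, if_neg (by omega), if_pos rfl]
      ring
    · have hleaves : shape s T i = 2 * T + 1 := by simp [shape, seq2, h]
      have hleafSum : ∑ m ∈ range (2 * T + 1), edgeLabel s T (2 * s + 2 + m + 2)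
          = ∑ m ∈ range (2 * T + 1), leafLabel s T m :=
        sum_congr rfl fun m _ => by rw [← edgeLabel_leaf]; congr 1; ring
      rw [hleaves, h, hleafSum, sum_leafLabel hT, edgeLabel_two_mul_add_two, vertexLabel,
        if_neg (by omega), if_neg (by omega), if_pos rfl]
      ring
  · have := lt_shape m.isLt
    change edgeLabel s T (i + m + 2) = vertexLabel s T (i + m + 2)
    rw [vertexLabel, if_neg (by omega), if_neg (by omega), if_neg (by omega)]

theorem isSEG_shape (hs : 1 ≤ s) (hT : 1 ≤ T) : IsSEG (shape s T) := by
  have hq : 2 * s + 1 + 2 + ∑ i, shape s T i = 2 * s + 2 * T + 5 := by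
    rw [sum_seq2]
    ring
  refine ⟨fun e => edgeLabel s T (edgeIndex s T e), ?_, ?_⟩
  · rw [hq]
    refine Set.bijOn_univ_of_injective (fun e e' h => edgeIndex_injective
        (edgeLabel_injOn hs hT (edgeIndex_lt e) (edgeIndex_lt e') h))
      (fun e => ?_) (by rw [card_segSet, card_rtEdge, hq])
    rw [mem_segSet_of_odd (by omega), show (2 * s + 2 * T + 5) / 2 = s + T + 2 by omega]
    exact edgeLabel_mem (edgeIndex_lt e)
  · rw [hq, vertexSum_edgeLabel hs hT]
    refine Set.bijOn_univ_of_injective (fun v v' h => vertexIndex_injective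
        (vertexLabel_injOn hs hT (vertexIndex_lt v) (vertexIndex_lt v') h))
      (fun v => ?_) (by rw [card_segSet, card_rtVertex, hq])
    rw [mem_segSet_of_even (by omega), show (2 * s + 2 * T + 5 + 1) / 2 = s + T + 3 by omega]
    exact vertexLabel_mem hs hT (vertexIndex_lt v)

end SuperEdgeGraceful

/-- For all odd integers `j ≥ 3` and `b ≥ 3`, the rooted tree `RT(0^j, 1, b)` is super
edge-graceful. -/
theorem stmt6 (j b : ℕ) (hj : Odd j) (hj3 : 3 ≤ j) (hb : Odd b) (hb3 : 3 ≤ b) :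
    IsSEG (seq2 j 1 b) := by
  obtain ⟨s, rfl⟩ := hj
  obtain ⟨T, rfl⟩ := hb
  exact SuperEdgeGraceful.isSEG_shape (by omega) (by omega)
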